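/- For every integer n ≥ 7 and every nonempty subset I of {2,3,…,n−2} with I ≠ {3}, one has Σ_{σ∈T(n,I)} (fix(σ)−1) ≥ (n−1)·Σ_{σ∈T(n,I)} sgn(σ), where sgn(σ) is 1 if σ is even and −1 if σ is odd. -/

import Mathlib

open Finset

/-- Adjacency matrix of the Cayley graph `Cay(S_n, S)`. -/
def adjMat (n : ℕ) (S : Finset (Equiv.Perm (Fin n))) :
    Matrix (Equiv.Perm (Fin n)) (Equiv.Perm (Fin n)) ℝ :=
  Matrix.of fun g h => if g⁻¹ * h ∈ S then 1 else 0

/-- `lam` is an eigenvalue of the Cayley graph `Cay(S_n, S)`. -/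
def IsEig (n : ℕ) (S : Finset (Equiv.Perm (Fin n))) (lam : ℝ) : Prop :=
  ∃ v : Equiv.Perm (Fin n) → ℝ, v ≠ 0 ∧ (adjMat n S).mulVec v = lam • v

/-- The number of fixed points of a permutation. -/
def fixCount (n : ℕ) (σ : Equiv.Perm (Fin n)) : ℕ :=
  (univ.filter fun i => σ i = i).card

/-- The eigenvalue of `Cay(S_n, S)` afforded by the standard representation. -/
noncomputable def stdEig (n : ℕ) (S : Finset (Equiv.Perm (Fin n))) : ℝ :=
  (1 / ((n : ℝ) - 1)) * ∑ σ ∈ S, ((fixCount n σ : ℝ) - 1)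

/-- `Cay(S_n, S)` has the Aldous property. -/
def HasAldous (n : ℕ) (S : Finset (Equiv.Perm (Fin n))) : Prop :=
  stdEig n S < S.card ∧ IsEig n S (stdEig n S) ∧
    ∀ lam : ℝ, IsEig n S lam → lam ≠ (S.card : ℝ) → lam ≤ stdEig n S

/-- `S` is a conjugacy class of `S_n`. -/
def IsConjClass (n : ℕ) (S : Finset (Equiv.Perm (Fin n))) : Prop :=
  ∃ σ : Equiv.Perm (Fin n), ∀ τ, τ ∈ S ↔ IsConj σ τ

/-- `T(n, I)`: the set of permutations whose support size lies in `I`. -/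
def T (n : ℕ) (I : Finset ℕ) : Finset (Equiv.Perm (Fin n)) :=
  univ.filter fun σ => σ.support.card ∈ I

/-!
Sort the permutations by support size `k`. A permutation with support `s` is a derangement of `s`,
and the derangements of a `k`-set number `D_k` and have signed count
`det (J - 1) = (-1)^(k-1) (k-1)` (`J` the all-ones matrix; matrix determinant lemma). Hence the
permutations with support size `k` contribute `C(n,k) ((n-k-1) D_k + (n-1) (-1)^k (k-1))` to
`∑ (fix σ - 1) - (n-1) ∑ sgn σ`. This is `-6 C(n,3)` for `k = 3`, exactly `6 C(n,3)` for `k = 2`,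
and at least `6 C(n,3)` for `4 ≤ k ≤ n-2` once `n ≥ 7`, because `D_k ≥ (k+1)^2` for `k ≥ 5`
and `C(n,k) ≥ C(n,3)` for `3 ≤ k ≤ n-3`. So any `k ≠ 3` in `I` pays for `k = 3`.
-/

open Finset Equiv Equiv.Perm Matrix

section Derangements

variable {α : Type*} [Fintype α] [DecidableEq α]

theorem sum_sign_derangements :
    ∑ σ : derangements α, (sign (σ : Perm α) : ℤ) =
      (-1) ^ Fintype.card α * (1 - Fintype.card α) := by
  have hdet : det (of fun i j : α => if i = j then (0 : ℤ) else 1) =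
      ∑ σ : derangements α, (sign (σ : Perm α) : ℤ) := by
    simp only [det_apply, of_apply]
    rw [← sum_subtype (univ.filter (· ∈ derangements α)) (fun _ => by simp)
      (fun σ => (sign σ : ℤ)), sum_filter]
    refine sum_congr rfl fun σ _ => ?_
    by_cases hσ : σ ∈ derangements α
    · rw [if_pos hσ, prod_eq_one fun i _ => if_neg (hσ i), Units.smul_def, smul_eq_mul, mul_one]
    · obtain ⟨i, hi⟩ : ∃ i, σ i = i := by simpa [derangements] using hσ
      rw [if_neg hσ, prod_eq_zero (mem_univ i) (by rw [if_pos hi]), smul_zero]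
  have hJ : (of fun i j : α => if i = j then (0 : ℤ) else 1) =
      -((1 : Matrix α α ℤ) +
        replicateCol Unit (fun _ : α => -1) * replicateRow Unit (fun _ : α => (1 : ℤ))) := by
    ext i j
    by_cases h : i = j <;> simp [h, Matrix.mul_apply]
  rw [← hdet, hJ, det_neg, det_one_add_replicateCol_mul_replicateRow]
  simp [dotProduct]
  ring

theorem sum_filter_support_eq {M : Type*} [AddCommMonoid M] (s : Finset α) (f : Perm α → M) :
    ∑ σ ∈ univ.filter (fun σ : Perm α => σ.support = s), f σ =
      ∑ τ : derangements s, f (ofSubtype (τ : Perm s)) := by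
  classical
  have hmem : ∀ σ : Perm α, σ ∈ univ.filter (fun σ : Perm α => σ.support = s) ↔
      ∀ a, a ∉ s ↔ a ∈ Function.fixedPoints σ := by
    intro σ
    simp only [mem_filter, mem_univ, true_and, Finset.ext_iff, Perm.mem_support,
      Function.mem_fixedPoints, Function.IsFixedPt]
    exact forall_congr' fun a => not_iff_comm
  rw [sum_subtype _ hmem f]
  exact (Fintype.sum_equiv (derangements.subtypeEquiv (· ∈ s)) _ _ fun τ => rfl).symm

theorem sum_sign_filter_support_eq (s : Finset α) :
    ∑ σ ∈ univ.filter (fun σ : Perm α => σ.support = s), (sign σ : ℤ) =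
      (-1) ^ #s * (1 - #s) := by
  rw [sum_filter_support_eq, ← Fintype.card_coe s, ← sum_sign_derangements]
  exact sum_congr rfl fun τ _ => by rw [sign_ofSubtype]

theorem card_filter_support_eq (s : Finset α) :
    #(univ.filter (fun σ : Perm α => σ.support = s)) = numDerangements #s := by
  rw [card_eq_sum_ones, sum_filter_support_eq, sum_const, card_univ, smul_eq_mul, mul_one,
    card_derangements_eq_numDerangements, Fintype.card_coe]

theorem sum_filter_card_support_eq {M : Type*} [AddCommMonoid M] (k : ℕ) (f : Perm α → M) :
    ∑ σ ∈ univ.filter (fun σ : Perm α => #σ.support = k), f σ =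
      ∑ s ∈ powersetCard k univ, ∑ σ ∈ univ.filter (fun σ : Perm α => σ.support = s), f σ := by
  rw [sum_fiberwise_eq_sum_filter]
  exact sum_congr (filter_congr fun σ _ => mem_powersetCard_univ.symm) fun _ _ => rfl

theorem sum_sign_filter_card_support_eq (k : ℕ) :
    ∑ σ ∈ univ.filter (fun σ : Perm α => #σ.support = k), (sign σ : ℤ) =
      (Fintype.card α).choose k * ((-1) ^ k * (1 - k)) := by
  rw [sum_filter_card_support_eq, sum_congr rfl fun s hs => by
    rw [sum_sign_filter_support_eq, (mem_powersetCard_univ.1 hs)], sum_const,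
    card_powersetCard, card_univ, nsmul_eq_mul]

theorem card_filter_card_support_eq (k : ℕ) :
    #(univ.filter (fun σ : Perm α => #σ.support = k)) =
      (Fintype.card α).choose k * numDerangements k := by
  rw [card_eq_sum_ones, sum_filter_card_support_eq, sum_congr rfl fun s hs => by
    rw [← card_eq_sum_ones, card_filter_support_eq, (mem_powersetCard_univ.1 hs)], sum_const,
    card_powersetCard, card_univ, smul_eq_mul]

end Derangements

theorem fixCount_add_card_support (n : ℕ) (σ : Perm (Fin n)) : fixCount n σ + #σ.support = n := by
  simpa [fixCount, Perm.support] using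
    card_filter_add_card_filter_not (s := univ) (p := fun i => σ i = i)

def fiberExcess (n k : ℕ) : ℤ :=
  n.choose k * ((n - k - 1) * numDerangements k + (n - 1) * (-1) ^ k * (k - 1))

theorem sum_filter_card_support_eq_fiberExcess (n k : ℕ) :
    ∑ σ ∈ univ.filter (fun σ : Perm (Fin n) => #σ.support = k),
      ((fixCount n σ : ℤ) - 1 - (n - 1) * sign σ) = fiberExcess n k := by
  have hfix : ∀ σ ∈ univ.filter (fun σ : Perm (Fin n) => #σ.support = k),
      (fixCount n σ : ℤ) - 1 = n - k - 1 := by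
    intro σ hσ
    have h := fixCount_add_card_support n σ
    rw [(mem_filter.1 hσ).2] at h
    omega
  rw [sum_sub_distrib, sum_congr rfl hfix, ← mul_sum, sum_sign_filter_card_support_eq, sum_const,
    card_filter_card_support_eq, Fintype.card_fin, fiberExcess, nsmul_eq_mul]
  push_cast
  ring

theorem Nat.choose_le_choose_of_le_half {n a b : ℕ} (hab : a ≤ b) (hb : b ≤ n / 2) :
    n.choose a ≤ n.choose b := by
  induction b, hab using Nat.le_induction with
  | base => rfl
  | succ b _ ih => exact (ih (by omega)).trans (choose_le_succ_of_lt_half_left (by omega))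

theorem Nat.choose_le_choose_of_le_of_add_le {n a b : ℕ} (hab : a ≤ b) (hb : a + b ≤ n) :
    n.choose a ≤ n.choose b := by
  rcases le_or_gt b (n / 2) with h | h
  · exact choose_le_choose_of_le_half hab h
  · rw [← choose_symm (by omega : b ≤ n)]
    exact choose_le_choose_of_le_half (by omega) (by omega)

theorem Nat.cast_choose_succ_right_eq {R : Type*} [CommRing R] (n k : ℕ) :
    (n.choose (k + 1) : R) * (k + 1) = n.choose k * (n - k) := by
  rcases le_or_gt k n with h | h
  · have h' := congrArg (Nat.cast : ℕ → R) (Nat.choose_succ_right_eq n k)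
    push_cast [h] at h'
    exact h'
  · simp [Nat.choose_eq_zero_of_lt h, Nat.choose_eq_zero_of_lt (h.trans (Nat.lt_succ_self k))]

theorem add_one_sq_le_numDerangements {k : ℕ} (hk : 5 ≤ k) : (k + 1) ^ 2 ≤ numDerangements k := by
  induction k, hk using Nat.le_induction with
  | base => decide
  | succ k _ ih =>
    have hrec := numDerangements_succ k
    have hpow : (-1 : ℤ) ^ k ≤ 1 := by rcases neg_one_pow_eq_or ℤ k with h | h <;> simp [h]
    zify at ih ⊢
    nlinarith

theorem fiberExcess_two (n : ℕ) : fiberExcess n 2 = 6 * n.choose 3 := by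
  have h := Nat.cast_choose_succ_right_eq (R := ℤ) n 2
  simp only [fiberExcess, show numDerangements 2 = 1 from rfl]
  push_cast at h ⊢
  linear_combination (-2) * h

theorem fiberExcess_three (n : ℕ) : fiberExcess n 3 = -(6 * n.choose 3) := by
  simp only [fiberExcess, show numDerangements 3 = 2 from rfl]
  push_cast
  ring

theorem six_mul_choose_three_le_fiberExcess_of_add_three_le {n k : ℕ} (hk4 : 4 ≤ k)
    (hkn : k + 3 ≤ n) : 6 * (n.choose 3 : ℤ) ≤ fiberExcess n k := by
  have hchoose : (n.choose 3 : ℤ) ≤ n.choose k := by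
    exact_mod_cast Nat.choose_le_choose_of_le_of_add_le (by omega) (by omega)
  have hfactor : (6 : ℤ) ≤ (n - k - 1) * numDerangements k + (n - 1) * (-1) ^ k * (k - 1) := by
    have hkn' : (k : ℤ) + 3 ≤ n := by exact_mod_cast hkn
    rcases hk4.eq_or_lt with rfl | hk5
    · simp only [show numDerangements 4 = 9 from rfl]
      push_cast
      linarith
    · have hD : ((k : ℤ) + 1) ^ 2 ≤ numDerangements k := by
        exact_mod_cast add_one_sq_le_numDerangements hk5
      have hk : (5 : ℤ) ≤ k := by exact_mod_cast hk5
      have hsign : -((n - 1) * (k - 1)) ≤ (n - 1) * (-1) ^ k * ((k : ℤ) - 1) := by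
        rcases neg_one_pow_eq_or ℤ k with h | h <;> rw [h] <;> nlinarith
      have hD' : (0 : ℤ) ≤ numDerangements k - (k - 1) := by nlinarith
      nlinarith [mul_nonneg (by linarith : (0 : ℤ) ≤ n - k - 3) hD']
  calc 6 * (n.choose 3 : ℤ) ≤ 6 * n.choose k := by linarith
    _ ≤ fiberExcess n k := by
      rw [fiberExcess, mul_comm (n.choose k : ℤ)]
      exact mul_le_mul_of_nonneg_right hfactor (Nat.cast_nonneg _)

theorem six_mul_choose_three_le_fiberExcess_add_two {m : ℕ} (hm : 5 ≤ m) :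
    6 * ((m + 2).choose 3 : ℤ) ≤ fiberExcess (m + 2) m := by
  have hchoose := Nat.cast_choose_succ_right_eq (R := ℤ) (m + 2) 2
  have hD : ((m : ℤ) + 1) ^ 2 ≤ numDerangements m := by
    exact_mod_cast add_one_sq_le_numDerangements hm
  have hsign : -((m + 1) * (m - 1)) ≤ ((m : ℤ) + 1) * (-1) ^ m * (m - 1) := by
    have : (5 : ℤ) ≤ m := by exact_mod_cast hm
    rcases neg_one_pow_eq_or ℤ m with h | h <;> rw [h] <;> nlinarith
  rw [fiberExcess, Nat.choose_symm_add]
  push_cast at hchoose ⊢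
  have hC : (0 : ℤ) ≤ (m + 2).choose 2 := by positivity
  nlinarith

theorem six_mul_choose_three_le_fiberExcess {n k : ℕ} (hn : 7 ≤ n) (hk2 : 2 ≤ k)
    (hkn : k ≤ n - 2) (hk3 : k ≠ 3) : 6 * (n.choose 3 : ℤ) ≤ fiberExcess n k := by
  rcases (by omega : k = 2 ∨ (4 ≤ k ∧ k + 3 ≤ n) ∨ (5 ≤ k ∧ n = k + 2)) with
    rfl | ⟨hk4, hkn⟩ | ⟨hk5, rfl⟩
  · exact (fiberExcess_two n).ge
  · exact six_mul_choose_three_le_fiberExcess_of_add_three_le hk4 hkn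
  · exact six_mul_choose_three_le_fiberExcess_add_two hk5

theorem Finset.sum_nonneg_of_ne_singleton {ι M : Type*} [AddCommMonoid M] [PartialOrder M]
    [IsOrderedAddMonoid M] {s : Finset ι} {f : ι → M} {a : ι} (hs : s ≠ {a})
    (hf : ∀ i ∈ s, i ≠ a → 0 ≤ f i) (hfa : ∀ i ∈ s, i ≠ a → 0 ≤ f a + f i) :
    0 ≤ ∑ i ∈ s, f i := by
  classical
  by_cases has : a ∈ s
  · obtain ⟨b, hbs, hba⟩ : ∃ b ∈ s, b ≠ a := by
      by_contra! h
      exact hs (eq_singleton_iff_unique_mem.2 ⟨has, h⟩)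
    rw [← add_sum_erase s f has, ← add_sum_erase _ f (mem_erase.2 ⟨hba, hbs⟩), ← add_assoc]
    refine add_nonneg (hfa b hbs hba) (sum_nonneg fun i hi => ?_)
    simp only [mem_erase] at hi
    exact hf i hi.2.2 hi.2.1
  · exact sum_nonneg fun i hi => hf i hi (ne_of_mem_of_not_mem hi has)

theorem stmt11_general (n : ℕ) (hn : 7 ≤ n) (I : Finset ℕ)
    (hI : I ⊆ Finset.Icc 2 (n - 2)) (hI3 : I ≠ {3}) :
    ((n : ℤ) - 1) * ∑ σ ∈ T n I, ((Equiv.Perm.sign σ : ℤ)) ≤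
      ∑ σ ∈ T n I, ((fixCount n σ : ℤ) - 1) := by
  have hsplit : ∑ σ ∈ T n I, ((fixCount n σ : ℤ) - 1) - (n - 1) * ∑ σ ∈ T n I, (sign σ : ℤ) =
      ∑ k ∈ I, fiberExcess n k := by
    rw [mul_sum, ← sum_sub_distrib, T, ← sum_fiberwise_eq_sum_filter]
    exact sum_congr rfl fun k _ => sum_filter_card_support_eq_fiberExcess n k
  have hbound : ∀ k ∈ I, k ≠ 3 → 6 * (n.choose 3 : ℤ) ≤ fiberExcess n k := fun k hk hk3 =>
    six_mul_choose_three_le_fiberExcess hn (mem_Icc.1 (hI hk)).1 (mem_Icc.1 (hI hk)).2 hk3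
  have hnonneg : 0 ≤ ∑ k ∈ I, fiberExcess n k :=
    sum_nonneg_of_ne_singleton hI3
      (fun k hk hk3 => (hbound k hk hk3).trans' (by positivity))
      (fun k hk hk3 => by linarith [hbound k hk hk3, fiberExcess_three n])
  linarith

/-- For every `n ≥ 7` and nonempty `I ⊆ {2, …, n-2}` with `I ≠ {3}`,
`Σ_{σ ∈ T(n,I)} (fix(σ) - 1) ≥ (n-1) · Σ_{σ ∈ T(n,I)} sgn(σ)`. -/
theorem stmt11 (n : ℕ) (hn : 7 ≤ n) (I : Finset ℕ) (hne : I.Nonempty)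
    (hI : I ⊆ Finset.Icc 2 (n - 2)) (hI3 : I ≠ {3}) :
    ((n : ℤ) - 1) * ∑ σ ∈ T n I, ((Equiv.Perm.sign σ : ℤ)) ≤
      ∑ σ ∈ T n I, ((fixCount n σ : ℤ) - 1) :=
  stmt11_general n hn I hI hI3
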